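/- arXiv:1601.03863 — 2 statements merged into one kernel-verified Lean document; each statement's English description precedes it below -/
import Mathlib

section
/- Let χ > 1, C > 0, δ > 0, r₀ > 0, and let φ : (−∞,0) × (0,∞) → [0,∞] satisfy φ(χr, h') ≥ (C|r|)^{2/r} (h''−h')^{−2/r} φ(r, h'') for all r < 0 and δ ≤ h' < h'' ≤ 5δ. Define r_k = −r₀ χ^k and h_k = δ(1 + (3/2)(1/2)^k). Then there exists a constant C₁ > 0, depending only on C, χ, δ, r₀, such that inf over k of φ(r_k, h_k) satisfies lim inf_{k→∞} φ(r_k, h_k) ≥ C₁ · φ(−r₀, 5δ/2). -/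
open Filter
open scoped ENNReal

/-- Abstract negative-exponent Moser iteration: iterating the one-step reverse Hölder
inequality along `r_k = -r₀ χ^k` and `h_k = δ(1 + (3/2)(1/2)^k)` yields a uniform lower
bound `liminf_k φ(r_k, h_k) ≥ C₁ φ(-r₀, 5δ/2)`. -/
theorem moser_iteration_negative (χ C δ r₀ : ℝ) (hχ : 1 < χ) (hC : 0 < C) (hδ : 0 < δ)
    (hr₀ : 0 < r₀) (φ : ℝ → ℝ → ℝ≥0∞)
    (hstep : ∀ r h' h'' : ℝ, r < 0 → δ ≤ h' → h' < h'' → h'' ≤ 5 * δ →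
      ENNReal.ofReal ((C * |r|) ^ (2 / r) * (h'' - h') ^ (-(2 / r))) * φ r h'' ≤
        φ (χ * r) h') :
    ∃ C₁ : ℝ, 0 < C₁ ∧
      ENNReal.ofReal C₁ * φ (-r₀) (5 * δ / 2) ≤
        liminf (fun k : ℕ => φ (-r₀ * χ ^ k) (δ * (1 + (3 / 2) * (1 / 2) ^ k))) atTop := by
  have hχ0 : (0:ℝ) < χ := lt_trans one_pos hχ
  set L : ℝ := Real.log (C * r₀) - Real.log (3 * δ / 4) with hL
  set c : ℝ := Real.log (2 * χ) with hc
  have hc0 : 0 ≤ c := Real.log_nonneg (by nlinarith)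
  set g : ℕ → ℝ := fun j => (|L| + j * c) * (1/χ)^j with hg
  have hgnn : ∀ j, 0 ≤ g j := fun j => by
    have h1 : (0:ℝ) ≤ |L| + j * c := by positivity
    have h2 : (0:ℝ) ≤ (1/χ)^j := by positivity
    exact mul_nonneg h1 h2
  have hq1 : ‖(1/χ : ℝ)‖ < 1 := by
    rw [Real.norm_eq_abs, abs_of_pos (by positivity), div_lt_one hχ0]; linarith
  have hsum : Summable g := by
    have hs1 : Summable (fun j : ℕ => |L| * (1/χ)^j) :=
      (summable_geometric_of_norm_lt_one hq1).mul_left _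
    have hs2 : Summable (fun j : ℕ => c * ((j:ℝ) * (1/χ)^j)) := by
      have := summable_pow_mul_geometric_of_norm_lt_one (R := ℝ) 1 hq1
      simpa using this.mul_left c
    have h := hs1.add hs2
    apply h.congr
    intro j; simp [hg]; ring
  set T := ∑' j, g j with hT
  have hpartial : ∀ k, ∑ j ∈ Finset.range k, g j ≤ T :=
    fun k => Summable.sum_le_tsum _ (fun j _ => hgnn j) hsum
  refine ⟨Real.exp (-(2/r₀) * T), Real.exp_pos _, ?_⟩
  set e : ℕ → ℝ := fun j => -(2/(r₀ * χ^j)) * (L + j * c) with he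
  have claim : ∀ k, ENNReal.ofReal (Real.exp (∑ j ∈ Finset.range k, e j)) * φ (-r₀) (5*δ/2)
      ≤ φ (-r₀ * χ^k) (δ * (1 + (3/2) * (1/2)^k)) := by
    intro k
    induction k with
    | zero =>
      have h1 : -r₀ * χ^0 = -r₀ := by ring
      have h2 : δ * (1 + (3/2) * ((1:ℝ)/2)^0) = 5*δ/2 := by rw [pow_zero]; ring
      simp only [Finset.range_zero, Finset.sum_empty, Real.exp_zero, ENNReal.ofReal_one,
        one_mul, h1, h2]
      exact le_refl _
    | succ k ih =>
      have hpk : (0:ℝ) < (1/2)^k := by positivity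
      have hpk1 : (0:ℝ) < (1/2)^(k+1) := by positivity
      have h1 : δ ≤ δ * (1 + (3/2) * (1/2)^(k+1)) := by nlinarith
      have h2 : δ * (1 + (3/2)*(1/2)^(k+1)) < δ * (1 + (3/2)*(1/2)^k) := by
        have : ((1:ℝ)/2)^(k+1) < (1/2)^k := by
          rw [pow_succ]; nlinarith
        nlinarith
      have h3 : δ * (1 + (3/2)*(1/2)^k) ≤ 5 * δ := by
        have : ((1:ℝ)/2)^k ≤ 1 := pow_le_one₀ (by norm_num) (by norm_num)
        nlinarith
      have hxk : (0:ℝ) < r₀ * χ^k := by positivity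
      have hrneg : -r₀ * χ^k < 0 := by nlinarith
      have key := hstep (-r₀*χ^k) (δ * (1 + (3/2)*(1/2)^(k+1))) (δ * (1 + (3/2)*(1/2)^k))
        hrneg h1 h2 h3
      have hr : χ * (-r₀ * χ^k) = -r₀ * χ^(k+1) := by ring
      rw [hr] at key
      have hconst : (C * |(-r₀ * χ^k)|) ^ (2 / (-r₀ * χ^k)) *
          (δ*(1+(3/2)*(1/2)^k) - δ*(1+(3/2)*(1/2)^(k+1))) ^ (-(2 / (-r₀ * χ^k)))
          = Real.exp (e k) := by
        have habs : |(-r₀ * χ^k)| = r₀ * χ^k := by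
          rw [abs_of_neg hrneg]; ring
        have hΔ : δ*(1+(3/2)*(1/2)^k) - δ*(1+(3/2)*((1:ℝ)/2)^(k+1)) = (3*δ/4) * (1/2)^k := by
          ring
        rw [habs, hΔ]
        have hX : (0:ℝ) < C * (r₀ * χ^k) := by positivity
        have hY : (0:ℝ) < (3*δ/4) * (1/2:ℝ)^k := by positivity
        rw [Real.rpow_def_of_pos hX, Real.rpow_def_of_pos hY, ← Real.exp_add]
        congr 1
        have hlogX : Real.log (C * (r₀ * χ^k)) = Real.log (C*r₀) + k * Real.log χ := by
          rw [show C * (r₀ * χ^k) = (C*r₀) * χ^k by ring,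
            Real.log_mul (by positivity) (by positivity), Real.log_pow]
        have hlogY : Real.log ((3*δ/4) * (1/2:ℝ)^k) = Real.log (3*δ/4) - k * Real.log 2 := by
          rw [Real.log_mul (by positivity) (by positivity), Real.log_pow,
            show ((1:ℝ)/2) = 2⁻¹ by norm_num, Real.log_inv]
          ring
        have hlog2χ : Real.log (2*χ) = Real.log 2 + Real.log χ :=
          Real.log_mul two_ne_zero (ne_of_gt hχ0)
        rw [hlogX, hlogY]
        simp only [he, hc, hL, hlog2χ]
        have hne : r₀ * χ^k ≠ 0 := ne_of_gt hxk
        field_simp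
        ring
      rw [hconst] at key
      calc ENNReal.ofReal (Real.exp (∑ j ∈ Finset.range (k+1), e j)) * φ (-r₀) (5*δ/2)
          = ENNReal.ofReal (Real.exp (e k)) *
            (ENNReal.ofReal (Real.exp (∑ j ∈ Finset.range k, e j)) * φ (-r₀) (5*δ/2)) := by
            rw [← mul_assoc, ← ENNReal.ofReal_mul (le_of_lt (Real.exp_pos _)),
              ← Real.exp_add, Finset.sum_range_succ, add_comm]
        _ ≤ ENNReal.ofReal (Real.exp (e k)) * φ (-r₀*χ^k) (δ*(1+(3/2)*(1/2)^k)) :=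
            mul_le_mul_right ih _
        _ ≤ φ (-r₀*χ^(k+1)) (δ*(1+(3/2)*(1/2)^(k+1))) := key
  have hCk : ∀ k, Real.exp (-(2/r₀)*T) ≤ Real.exp (∑ j ∈ Finset.range k, e j) := by
    intro k
    apply Real.exp_le_exp.2
    have h1 : ∀ j ∈ Finset.range k, -(2/r₀) * g j ≤ e j := by
      intro j _
      have hxj : (0:ℝ) < χ^j := pow_pos hχ0 j
      have hrw : -(2/(r₀ * χ^j)) = -(2/r₀) * (1/χ)^j := by
        rw [div_pow, one_pow]
        field_simp
      simp only [he, hg, hrw]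
      have hqnn : (0:ℝ) ≤ (1/χ)^j := by positivity
      have hLle : L ≤ |L| := le_abs_self L
      nlinarith [mul_nonneg (mul_nonneg (le_of_lt (div_pos two_pos hr₀)) hqnn)
        (sub_nonneg.2 hLle)]
    calc -(2/r₀)*T ≤ -(2/r₀) * ∑ j ∈ Finset.range k, g j := by
          apply mul_le_mul_of_nonpos_left (hpartial k)
          have : (0:ℝ) < 2/r₀ := div_pos two_pos hr₀
          linarith
      _ = ∑ j ∈ Finset.range k, -(2/r₀) * g j := by rw [Finset.mul_sum]
      _ ≤ ∑ j ∈ Finset.range k, e j := Finset.sum_le_sum h1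
  refine le_liminf_of_le (by isBoundedDefault) (Eventually.of_forall fun k => ?_)
  calc ENNReal.ofReal (Real.exp (-(2/r₀)*T)) * φ (-r₀) (5*δ/2)
      ≤ ENNReal.ofReal (Real.exp (∑ j ∈ Finset.range k, e j)) * φ (-r₀) (5*δ/2) :=
        mul_le_mul_left (ENNReal.ofReal_le_ofReal (hCk k)) _
    _ ≤ φ (-r₀ * χ^k) (δ * (1 + (3/2) * (1/2)^k)) := claim k
end

section
/- Let μ be a finite measure on B and w̃ : B → ℝ measurable. Suppose there exist C > 0 and ν ≥ 1 such that for all integers k ≥ ν, (∫_B |w̃|^k dμ)^{1/k} ≤ C(M + k), where M := (∫_B |w̃|^ν dμ)^{1/ν}. Then there exists r₀ > 0, depending only on C and μ(B), such that ∫_B e^{r₀|w̃|} dμ < ∞; moreover the bound on this integral depends only on C, μ(B), and M. -/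
open MeasureTheory Nat Real

/-!
Expanding the exponential, `∫ exp (r |w|) = ∑ⱼ rʲ ∫ |w|ʲ / j!`. Every moment is bounded by
`(1 + μ univ) (D (M + 1 + j))ʲ` with `D = max 1 C`: for `j ≥ ν` this is the hypothesis, and for
`j < ν` it follows by integrating `tʲ ≤ Bʲ + B^(j - ν) t^ν` with `B = M + 1 ≥ ‖w‖_ν`.
Since `(x + j)ʲ / j! ≤ e^(x + j)`, the `j`-th term of the series is then at most
`(1 + μ univ) e^(M + 1) (r D e)ʲ`, a geometric series of ratio `1/2` for `r = 1 / (2 e D)`.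
-/

theorem rpow_le_rpow_add_rpow_sub_mul_rpow {t B p q : ℝ} (ht : 0 ≤ t) (hB : 0 < B) (hq : 0 ≤ q)
    (hqp : q ≤ p) : t ^ q ≤ B ^ q + B ^ (q - p) * t ^ p := by
  rcases le_or_gt t B with htB | hBt
  · have : 0 ≤ B ^ (q - p) * t ^ p := by positivity
    linarith [rpow_le_rpow ht htB hq]
  · have ht0 : 0 < t := hB.trans hBt
    calc t ^ q = t ^ (q - p) * t ^ p := by rw [← rpow_add ht0, sub_add_cancel]
      _ ≤ B ^ (q - p) * t ^ p :=
        mul_le_mul_of_nonneg_right (rpow_le_rpow_of_nonpos hB hBt.le (by linarith)) (by positivity)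
      _ ≤ B ^ q + B ^ (q - p) * t ^ p := le_add_of_nonneg_left (by positivity)

theorem mul_add_pow_div_factorial_le {c x : ℝ} (hc : 0 ≤ c) (hx : 0 ≤ x) (j : ℕ) :
    (c * (x + j)) ^ j / j ! ≤ exp x * (c * exp 1) ^ j :=
  calc (c * (x + j)) ^ j / j ! = c ^ j * ((x + j) ^ j / j !) := by rw [mul_pow, mul_div_assoc]
    _ ≤ c ^ j * exp (x + j) := by gcongr; exact pow_div_factorial_le_exp _ (by positivity) j
    _ = exp x * (c * exp 1) ^ j := by rw [exp_add, ← exp_one_pow]; ring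

section

variable {α : Type*} [MeasurableSpace α] {μ : Measure α}

theorem integrable_and_hasSum_integral_of_nonneg {F : ℕ → α → ℝ} {f : α → ℝ}
    (hF_nonneg : ∀ i x, 0 ≤ F i x) (hF_int : ∀ i, Integrable (F i) μ)
    (hF_sum : Summable fun i => ∫ x, F i x ∂μ) (hf_meas : AEStronglyMeasurable f μ)
    (hf : ∀ x, HasSum (fun i => F i x) (f x)) :
    Integrable f μ ∧ HasSum (fun i => ∫ x, F i x ∂μ) (∫ x, f x ∂μ) := by
  have hF_ofReal : ∀ i, ∫⁻ x, ENNReal.ofReal (F i x) ∂μ = ENNReal.ofReal (∫ x, F i x ∂μ) :=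
    fun i => (ofReal_integral_eq_lintegral_ofReal (hF_int i) (ae_of_all _ (hF_nonneg i))).symm
  have hf_ofReal : ∀ x, ENNReal.ofReal (f x) = ∑' i, ENNReal.ofReal (F i x) := fun x => by
    rw [← (hf x).tsum_eq, ENNReal.ofReal_tsum_of_nonneg (hF_nonneg · x) (hf x).summable]
  have hf_nonneg : 0 ≤ᵐ[μ] f := ae_of_all _ fun x => (hf x).nonneg (hF_nonneg · x)
  refine ⟨⟨hf_meas, ?_⟩, ?_⟩
  · rw [hasFiniteIntegral_iff_ofReal hf_nonneg, lintegral_congr hf_ofReal,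
      lintegral_tsum fun i => (hF_int i).1.aemeasurable.ennreal_ofReal, tsum_congr hF_ofReal,
      ← ENNReal.ofReal_tsum_of_nonneg (fun i => integral_nonneg (hF_nonneg i)) hF_sum]
    exact ENNReal.ofReal_lt_top
  · have hF_norm : ∀ i, ∫ x, ‖F i x‖ ∂μ = ∫ x, F i x ∂μ := fun i =>
      integral_congr_ae (ae_of_all _ fun x => Real.norm_of_nonneg (hF_nonneg i x))
    simpa only [(hf _).tsum_eq] using
      hasSum_integral_of_summable_integral_norm hF_int (by simpa only [hF_norm] using hF_sum)

theorem integrable_exp_mul_and_hasSum_moments {f : α → ℝ} (hf : Measurable f)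
    (hf_nonneg : ∀ x, 0 ≤ f x) {r : ℝ} (hr : 0 ≤ r)
    (hf_int : ∀ j : ℕ, Integrable (fun x => f x ^ j) μ)
    (hsum : Summable fun j : ℕ => r ^ j * (∫ x, f x ^ j ∂μ) / j !) :
    Integrable (fun x => exp (r * f x)) μ ∧
      HasSum (fun j : ℕ => r ^ j * (∫ x, f x ^ j ∂μ) / j !) (∫ x, exp (r * f x) ∂μ) := by
  have hF : ∀ j : ℕ, ∫ x, (r * f x) ^ j / j ! ∂μ = r ^ j * (∫ x, f x ^ j ∂μ) / j ! := fun j => by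
    simp only [mul_pow, integral_div, integral_const_mul]
  simp only [← hF] at hsum ⊢
  refine integrable_and_hasSum_integral_of_nonneg
    (fun j x => div_nonneg (pow_nonneg (mul_nonneg hr (hf_nonneg x)) j) (by positivity))
    (fun j => by simpa only [mul_pow] using ((hf_int j).const_mul (r ^ j)).div_const (j ! : ℝ))
    hsum (by fun_prop) fun x => ?_
  simpa only [exp_eq_exp_ℝ] using NormedSpace.expSeries_div_hasSum_exp (r * f x)

variable [IsFiniteMeasure μ] {f : α → ℝ}

theorem integrable_rpow_of_le (hf : Measurable f) (hf_nonneg : ∀ x, 0 ≤ f x) {p q : ℝ}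
    (hq : 0 ≤ q) (hqp : q ≤ p) (hfp : Integrable (fun x => f x ^ p) μ) :
    Integrable (fun x => f x ^ q) μ := by
  refine ((integrable_const 1).add hfp).mono' (hf.pow_const q).aestronglyMeasurable
    (ae_of_all _ fun x => ?_)
  rw [norm_of_nonneg (rpow_nonneg (hf_nonneg x) q)]
  simpa using rpow_le_rpow_add_rpow_sub_mul_rpow (hf_nonneg x) one_pos hq hqp

theorem integral_rpow_le_of_integral_rpow_le (hf : Measurable f) (hf_nonneg : ∀ x, 0 ≤ f x)
    {p q B : ℝ} (hq : 0 ≤ q) (hqp : q ≤ p) (hB : 0 < B) (hfp : Integrable (fun x => f x ^ p) μ)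
    (hfB : ∫ x, f x ^ p ∂μ ≤ B ^ p) :
    ∫ x, f x ^ q ∂μ ≤ (1 + μ.real Set.univ) * B ^ q :=
  calc ∫ x, f x ^ q ∂μ ≤ ∫ x, (B ^ q + B ^ (q - p) * f x ^ p) ∂μ :=
        integral_mono (integrable_rpow_of_le hf hf_nonneg hq hqp hfp)
          ((integrable_const _).add (hfp.const_mul _))
          fun x => rpow_le_rpow_add_rpow_sub_mul_rpow (hf_nonneg x) hB hq hqp
    _ = μ.real Set.univ * B ^ q + B ^ (q - p) * ∫ x, f x ^ p ∂μ := by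
        rw [integral_add (integrable_const _) (hfp.const_mul _), integral_const,
          integral_const_mul, smul_eq_mul]
    _ ≤ μ.real Set.univ * B ^ q + B ^ (q - p) * B ^ p := by gcongr
    _ = (1 + μ.real Set.univ) * B ^ q := by rw [← rpow_add hB, sub_add_cancel]; ring

theorem integrable_pow_and_integral_pow_le_of_moment_growth (hf : Measurable f)
    (hf_nonneg : ∀ x, 0 ≤ f x) {ν C M : ℝ} (hν : 0 < ν) (hM : (∫ x, f x ^ ν ∂μ) ^ (1 / ν) ≤ M)
    (hf_int : ∀ k : ℕ, ν ≤ k → Integrable (fun x => f x ^ (k : ℝ)) μ)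
    (hf_mom : ∀ k : ℕ, ν ≤ k → (∫ x, f x ^ (k : ℝ) ∂μ) ^ (1 / (k : ℝ)) ≤ C * (M + k)) (j : ℕ) :
    Integrable (fun x => f x ^ j) μ ∧
      ∫ x, f x ^ j ∂μ ≤ (1 + μ.real Set.univ) * (max 1 C * (M + 1 + j)) ^ j := by
  have hfν_nonneg : 0 ≤ ∫ x, f x ^ ν ∂μ := integral_nonneg fun x => rpow_nonneg (hf_nonneg x) ν
  have hM_nonneg : 0 ≤ M := (rpow_nonneg hfν_nonneg _).trans hM
  have hfj_nonneg : 0 ≤ ∫ x, f x ^ j ∂μ := integral_nonneg fun x => pow_nonneg (hf_nonneg x) j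
  have hV : 1 ≤ 1 + μ.real Set.univ := le_add_of_nonneg_right measureReal_nonneg
  have hD : 0 < max 1 C := lt_max_of_lt_left one_pos
  rcases le_or_gt ν j with hνj | hjν
  · have hfj := hf_int j hνj
    have hmom := hf_mom j hνj
    simp only [rpow_natCast] at hfj hmom
    have hCM : 0 ≤ C * (M + j) := (rpow_nonneg hfj_nonneg _).trans hmom
    rw [one_div, rpow_inv_le_iff_of_pos hfj_nonneg hCM (hν.trans_le hνj), rpow_natCast] at hmom
    refine ⟨hfj, ?_⟩
    calc ∫ x, f x ^ j ∂μ ≤ (C * (M + j)) ^ j := hmom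
      _ ≤ (max 1 C * (M + 1 + j)) ^ j := by
        gcongr ?_ ^ _
        exact mul_le_mul (le_max_right 1 C) (by linarith) (by linarith) hD.le
      _ ≤ (1 + μ.real Set.univ) * (max 1 C * (M + 1 + j)) ^ j :=
        le_mul_of_one_le_left (by positivity) hV
  · have hfν : Integrable (fun x => f x ^ ν) μ :=
      integrable_rpow_of_le hf hf_nonneg hν.le (Nat.le_ceil ν) (hf_int _ (Nat.le_ceil ν))
    have hfB : ∫ x, f x ^ ν ∂μ ≤ (M + 1) ^ ν := by
      rw [one_div, rpow_inv_le_iff_of_pos hfν_nonneg hM_nonneg hν] at hM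
      exact hM.trans (by gcongr; linarith)
    have hfj := integrable_rpow_of_le hf hf_nonneg (Nat.cast_nonneg j) hjν.le hfν
    have hmom := integral_rpow_le_of_integral_rpow_le hf hf_nonneg (Nat.cast_nonneg j) hjν.le
      (by positivity) hfν hfB
    simp only [rpow_natCast] at hfj hmom
    refine ⟨hfj, hmom.trans ?_⟩
    gcongr
    calc M + 1 = 1 * (M + 1) := (one_mul _).symm
      _ ≤ max 1 C * (M + 1 + j) := mul_le_mul (le_max_left 1 C) (by linarith) (by positivity) hD.le

end

theorem exponential_integrability_step_general (C : ℝ) (V : ℝ) (hV : 0 < V) :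
    ∃ r₀ : ℝ, 0 < r₀ ∧ ∃ K : ℝ → ℝ,
      ∀ (α : Type) [MeasurableSpace α] (μ : Measure α),
        (μ Set.univ).toReal = V →
        ∀ (w : α → ℝ), Measurable w →
        ∀ ν : ℝ, 1 ≤ ν →
        ∀ M : ℝ, M = (∫ x, |w x| ^ ν ∂μ) ^ (1 / ν) →
        (∀ k : ℕ, ν ≤ (k : ℝ) → Integrable (fun x => |w x| ^ (k : ℝ)) μ) →
        (∀ k : ℕ, ν ≤ (k : ℝ) →
          (∫ x, |w x| ^ (k : ℝ) ∂μ) ^ (1 / (k : ℝ)) ≤ C * (M + (k : ℝ))) →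
        Integrable (fun x => Real.exp (r₀ * |w x|)) μ ∧
          ∫ x, Real.exp (r₀ * |w x|) ∂μ ≤ K M := by
  refine ⟨(2 * exp 1 * max 1 C)⁻¹, by positivity, fun M => 2 * (1 + V) * exp (M + 1), ?_⟩
  intro α _ μ hμV w hw ν hν M hM hw_int hw_mom
  set r := (2 * exp 1 * max 1 C)⁻¹
  have : IsFiniteMeasure μ := ⟨(ENNReal.toReal_pos_iff.mp (hμV ▸ hV)).2⟩
  have hM_nonneg : 0 ≤ M :=
    hM ▸ rpow_nonneg (integral_nonneg fun x => rpow_nonneg (abs_nonneg _) _) _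
  have hmom := integrable_pow_and_integral_pow_le_of_moment_growth hw.abs
    (fun x => abs_nonneg (w x)) (by linarith) hM.ge hw_int hw_mom
  simp only [measureReal_def, hμV] at hmom
  have hterm (j : ℕ) : r ^ j * (∫ x, |w x| ^ j ∂μ) / j ! ≤ (1 + V) * exp (M + 1) * (1 / 2) ^ j :=
    calc r ^ j * (∫ x, |w x| ^ j ∂μ) / j !
        ≤ r ^ j * ((1 + V) * (max 1 C * (M + 1 + j)) ^ j) / j ! := by gcongr; exact (hmom j).2
      _ = (1 + V) * ((r * max 1 C * ((M + 1) + j)) ^ j / j !) := by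
        rw [mul_assoc r, mul_pow r]; ring
      _ ≤ (1 + V) * (exp (M + 1) * (r * max 1 C * exp 1) ^ j) := by
        gcongr
        exact mul_add_pow_div_factorial_le (by positivity) (by positivity) j
      _ = (1 + V) * exp (M + 1) * (1 / 2) ^ j := by
        rw [show r * max 1 C * exp 1 = 1 / 2 by simp only [r]; field_simp]; ring
  have hgeom := hasSum_geometric_two.mul_left ((1 + V) * exp (M + 1))
  obtain ⟨hint, hsum⟩ := integrable_exp_mul_and_hasSum_moments hw.abs (fun x => abs_nonneg _)
    (by positivity) (fun j => (hmom j).1)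
    (hgeom.summable.of_nonneg_of_le (fun j => by positivity) hterm)
  exact ⟨hint, by linarith [hasSum_le hterm hsum hgeom]⟩

/-- Trudinger's exponential integrability step: if `(∫ |w̃|^k)^{1/k} ≤ C(M + k)` for all
integers `k ≥ ν`, with `M = (∫ |w̃|^ν)^{1/ν}`, then there exists `r₀ > 0` depending only on
`C` and the total measure, such that `∫ e^{r₀|w̃|} < ∞` with a bound depending only on
`C`, the total measure and `M`. -/
theorem exponential_integrability_step (C : ℝ) (hC : 0 < C) (V : ℝ) (hV : 0 < V) :
    ∃ r₀ : ℝ, 0 < r₀ ∧ ∃ K : ℝ → ℝ,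
      ∀ (α : Type) [MeasurableSpace α] (μ : Measure α),
        (μ Set.univ).toReal = V →
        ∀ (w : α → ℝ), Measurable w →
        ∀ ν : ℝ, 1 ≤ ν →
        ∀ M : ℝ, M = (∫ x, |w x| ^ ν ∂μ) ^ (1 / ν) →
        (∀ k : ℕ, ν ≤ (k : ℝ) → Integrable (fun x => |w x| ^ (k : ℝ)) μ) →
        (∀ k : ℕ, ν ≤ (k : ℝ) →
          (∫ x, |w x| ^ (k : ℝ) ∂μ) ^ (1 / (k : ℝ)) ≤ C * (M + (k : ℝ))) →
        Integrable (fun x => Real.exp (r₀ * |w x|)) μ ∧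
          ∫ x, Real.exp (r₀ * |w x|) ∂μ ≤ K M :=
  exponential_integrability_step_general C V hV
end
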